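/- arXiv:2006.12330 — 2 statements merged into one kernel-verified Lean document; each statement's English description precedes it below -/
import Mathlib

section
/- If a 2nfa(k) M has at least one safe head, then M runs in linear time: every computational path of M on inputs of length n halts within |Q|·(n+2) steps. Consequently, a language is recognized by a linear-time 2nfa(k) for some k if and only if it is recognized by some 2nfa(k') with at least one safe head. -/
/-- Tape symbols: input symbols plus the two end markers. -/
inductive TapeSym (α : Type) where
  | lend : TapeSym α
  | rend : TapeSym α
  | ch : α → TapeSym α

/-- Head movements: left, stay put, right. -/
inductive HeadMove where
  | L : HeadMove
  | S : HeadMove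
  | R : HeadMove

/-- Applying a head movement to a head position on a tape holding an input of
length `n` flanked by end markers (positions `0,...,n+1`). -/
def HeadMove.apply (n : ℕ) : HeadMove → ℕ → ℕ
  | .L, p => p - 1
  | .S, p => p
  | .R, p => min (p + 1) (n + 1)

/-- The symbol at position `p` of the tape `▷ x ◁`. -/
def tapeRead {α : Type} (x : List α) (p : ℕ) : TapeSym α :=
  if h : 0 < p ∧ p ≤ x.length then TapeSym.ch (x.get ⟨p - 1, by omega⟩)
  else if p = 0 then TapeSym.lend else TapeSym.rend

/-- A two-way `k`-head nondeterministic finite automaton with state set `Q`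
and input alphabet `α`. -/
structure MNFA (Q : Type) (k : ℕ) (α : Type) where
  q0 : Q
  qacc : Q
  qrej : Q
  δ : Q → (Fin k → TapeSym α) → Set (Q × (Fin k → HeadMove))

namespace MNFA

variable {Q : Type} {k : ℕ} {α : Type}

/-- One step of `M` on input `x`, between configurations (state, head
positions).  No step is possible from the halting states. -/
def Step (M : MNFA Q k α) (x : List α) (c c' : Q × (Fin k → ℕ)) : Prop :=
  c.1 ≠ M.qacc ∧ c.1 ≠ M.qrej ∧
  ∃ tr ∈ M.δ c.1 (fun i => tapeRead x (c.2 i)),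
    c'.1 = tr.1 ∧ ∀ i, c'.2 i = (tr.2 i).apply x.length (c.2 i)

/-- `f` describes a computational path of `M` on `x` of length `L` starting
from the initial configuration. -/
def IsPath (M : MNFA Q k α) (x : List α) (f : ℕ → Q × (Fin k → ℕ)) (L : ℕ) : Prop :=
  f 0 = (M.q0, fun _ => 0) ∧ ∀ t < L, M.Step x (f t) (f (t + 1))

/-- `M` accepts `x` iff some computational path reaches the accept state. -/
def Accepts (M : MNFA Q k α) (x : List α) : Prop :=
  ∃ f L, M.IsPath x f L ∧ (f L).1 = M.qacc

/-- `M` recognizes the language `A`. -/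
def Recognizes (M : MNFA Q k α) (A : Set (List α)) : Prop :=
  ∀ x, M.Accepts x ↔ x ∈ A

/-- One step of the single-head projection automaton `M_i` for the `i`-th head
of `M`: the readings of the other heads are existentially quantified. -/
def ProjStep (M : MNFA Q k α) (i : Fin k) (x : List α) (c c' : Q × ℕ) : Prop :=
  c.1 ≠ M.qacc ∧ c.1 ≠ M.qrej ∧
  ∃ y : Fin k → TapeSym α, y i = tapeRead x c.2 ∧
  ∃ tr ∈ M.δ c.1 y, c'.1 = tr.1 ∧ c'.2 = (tr.2 i).apply x.length c.2

/-- The `i`-th head of `M` is safe iff the projection automaton `M_i` is always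
halting: on no input does it have an infinite computational path. -/
def SafeHead (M : MNFA Q k α) (i : Fin k) : Prop :=
  ∀ x : List α, ¬ ∃ g : ℕ → Q × ℕ, g 0 = (M.q0, 0) ∧ ∀ t, M.ProjStep i x (g t) (g (t + 1))

end MNFA

open MNFA in
theorem apply_le (n : ℕ) (m : HeadMove) (p : ℕ) (hp : p ≤ n + 1) : m.apply n p ≤ n + 1 := by
  cases m <;> simp [HeadMove.apply] <;> omega

theorem tapeRead_rend {α : Type} (x : List α) (p : ℕ) (hp : x.length < p) :
    tapeRead x p = TapeSym.rend := by
  unfold tapeRead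
  rw [dif_neg (by omega), if_neg (by omega)]

theorem tapeRead_ne_rend {α : Type} (x : List α) (p : ℕ) (h : tapeRead x p ≠ TapeSym.rend) :
    p ≤ x.length := by
  by_contra hc
  exact h (tapeRead_rend x p (by omega))

theorem tapeRead_ne_rend_of_le {α : Type} (x : List α) {p : ℕ} (hp : p ≤ x.length) :
    tapeRead x p ≠ TapeSym.rend := by
  unfold tapeRead
  split_ifs with h1 h2
  · simp
  · simp
  · exfalso; omega

theorem part1 {Q : Type} [Fintype Q] {k : ℕ} {α : Type} (M : MNFA Q k α) (i : Fin k)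
    (hs : M.SafeHead i) (x : List α) (f : ℕ → Q × (Fin k → ℕ)) (L : ℕ)
    (hp : M.IsPath x f L) : L ≤ Fintype.card Q * (x.length + 2) := by
  set n := x.length with hn
  by_contra hL
  push_neg at hL
  obtain ⟨h0, hstep⟩ := hp
  have hposall : ∀ t, t ≤ L → ∀ j, (f t).2 j ≤ n + 1 := by
    intro t
    induction t with
    | zero => intro _ j; rw [h0]; simp
    | succ t ih =>
      intro ht j
      obtain ⟨_, _, tr, htr, hq, hh⟩ := hstep t (by omega)
      rw [hh j]
      exact apply_le _ _ _ (ih (by omega) j)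
  have hg : ∀ t, t < L → M.ProjStep i x ((f t).1, (f t).2 i) ((f (t+1)).1, (f (t+1)).2 i) := by
    intro t ht
    obtain ⟨h1, h2, tr, htr, hq, hh⟩ := hstep t ht
    exact ⟨h1, h2, fun j => tapeRead x ((f t).2 j), rfl, tr, htr, hq, hh i⟩
  -- pigeonhole
  have hcard : Fintype.card (Q × Fin (n+2)) < Fintype.card (Fin (Fintype.card Q * (n + 2) + 1)) := by
    simp [Fintype.card_prod]
  obtain ⟨a0, b0, hab, hGab⟩ := Fintype.exists_ne_map_eq_of_card_lt
    (fun t : Fin (Fintype.card Q * (n + 2) + 1) =>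
      ((f t.val).1, (⟨(f t.val).2 i, by
        have := hposall t.val (by have := t.isLt; omega) i; omega⟩ : Fin (n+2)))) hcard
  have hrep : ∃ a b : ℕ, a < b ∧ b ≤ Fintype.card Q * (n + 2) ∧
      ((f a).1, (f a).2 i) = ((f b).1, (f b).2 i) := by
    have h1 := congrArg Prod.fst hGab
    have h2 := congrArg (fun p => ((p.2 : Fin (n+2)) : ℕ)) hGab
    simp only at h1 h2
    rcases Nat.lt_or_ge a0.val b0.val with h | h
    · exact ⟨a0.val, b0.val, h, by have := b0.isLt; omega, Prod.ext h1 h2⟩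
    · have h' : b0.val < a0.val := by
        rcases Nat.lt_or_ge b0.val a0.val with h'' | h''
        · exact h''
        · exact absurd (Fin.ext (by omega)) hab
      exact ⟨b0.val, a0.val, h', by have := a0.isLt; omega, Prod.ext h1.symm h2.symm⟩
  obtain ⟨a, b, hlt, hbB, heq⟩ := hrep
  have hbL : b ≤ L := by omega
  apply hs x
  refine ⟨fun t => if t < a then ((f t).1, (f t).2 i)
    else ((f (a + (t - a) % (b - a))).1, (f (a + (t - a) % (b - a))).2 i), ?_, ?_⟩
  · beta_reduce
    by_cases h : 0 < a
    · rw [if_pos h, h0]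
    · rw [if_neg h]
      have ha : a = 0 := by omega
      subst ha
      simp [h0]
  · intro t
    beta_reduce
    by_cases h1 : t + 1 ≤ a
    · have ht : t < a := by omega
      rw [if_pos ht]
      by_cases h2 : t + 1 < a
      · rw [if_pos h2]; exact hg t (by omega)
      · have : t + 1 = a := by omega
        rw [if_neg (by omega)]
        have e : (t + 1 - a) % (b - a) = 0 := by
          rw [this]; simp
        rw [e, Nat.add_zero, ← this]
        exact hg t (by omega)
    · have hta : a ≤ t := by omega
      rw [if_neg (by omega), if_neg (by omega)]
      set d := b - a with hd
      have hd0 : 0 < d := by omega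
      set r := (t - a) % d with hr
      have hrd : r < d := Nat.mod_lt _ hd0
      have hsucc : t + 1 - a = (t - a) + 1 := by omega
      rw [hsucc]
      have hdm := Nat.div_add_mod (t - a) d
      by_cases hc : r + 1 < d
      · have e1 : t - a + 1 = d * ((t - a) / d) + (r + 1) := by omega
        have : (t - a + 1) % d = r + 1 := by
          rw [e1, Nat.mul_add_mod, Nat.mod_eq_of_lt hc]
        rw [this, ← Nat.add_assoc]
        exact hg (a + r) (by omega)
      · have hc' : r + 1 = d := by omega
        have e1 : t - a + 1 = d * ((t - a) / d + 1) := by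
          rw [Nat.mul_add, Nat.mul_one]; omega
        have e0 : (t - a + 1) % d = 0 := by rw [e1, Nat.mul_mod_right]
        rw [e0, Nat.add_zero]
        have hab2 : a + r + 1 = b := by omega
        have := hg (a + r) (by omega)
        rw [hab2] at this
        rw [← heq] at this
        exact this
open Classical in
/-- Add to `M` a counter mod `c+1` and an extra head that moves right every
`c+1` steps and forbids reading the right end marker. -/
noncomputable def lift {Q : Type} {k : ℕ} {α : Type} (M : MNFA Q k α) (c : ℕ) :
    MNFA (Q × Fin (c + 1)) (k + 1) α where
  q0 := (M.q0, 0)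
  qacc := (M.qacc, 0)
  qrej := (M.qrej, 0)
  δ := fun s y =>
    if y (Fin.last k) = TapeSym.rend then ∅
    else {t | ∃ p ∈ M.δ s.1 (fun h => y h.castSucc),
          t = ((p.1, if p.1 = M.qacc ∨ p.1 = M.qrej then 0 else s.2 + 1),
               Fin.lastCases (if s.2 = Fin.last c then HeadMove.R else HeadMove.S) p.2)}

theorem lift_safe {Q : Type} {k : ℕ} {α : Type} (M : MNFA Q k α) (c : ℕ) :
    (lift M c).SafeHead (Fin.last k) := by
  rintro x ⟨g, hg0, hgs⟩
  set n := x.length with hn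
  have hnr : ∀ t, tapeRead x ((g t).2) ≠ TapeSym.rend := by
    intro t hrend
    obtain ⟨_, _, y, hy, tr, htr, _⟩ := hgs t
    simp only [lift] at htr
    rw [if_pos (by rw [hy, hrend])] at htr
    exact htr
  have hpos : ∀ t, (g t).2 ≤ n := fun t => tapeRead_ne_rend _ _ (hnr t)
  have hnh : ∀ t, (g t).1 ≠ ((M.qacc, 0) : Q × Fin (c+1)) ∧ (g t).1 ≠ ((M.qrej, 0) : Q × Fin (c+1)) := by
    intro t
    obtain ⟨h1, h2, _⟩ := hgs t
    exact ⟨h1, h2⟩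
  have key : ∀ t, (g (t+1)).2 * (c+1) + ((g (t+1)).1.2 : ℕ)
      = (g t).2 * (c+1) + ((g t).1.2 : ℕ) + 1 := by
    intro t
    obtain ⟨_, _, y, hy, tr, htr, hst, hpo⟩ := hgs t
    simp only [lift] at htr
    rw [if_neg (by rw [hy]; exact hnr t)] at htr
    obtain ⟨p, hp, rfl⟩ := htr
    by_cases hq : p.1 = M.qacc ∨ p.1 = M.qrej
    · exfalso
      rcases hq with h | h
      · exact (hnh (t+1)).1 (by rw [hst]; simp [h])
      · exact (hnh (t+1)).2 (by rw [hst]; simp [h])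
    · rw [hst, hpo]
      simp only [if_neg hq, Fin.lastCases_last]
      by_cases hj : (g t).1.2 = Fin.last c
      · simp only [if_pos hj, HeadMove.apply]
        have h1 : (g t).2 + 1 ≤ n + 1 := by have := hpos t; omega
        have h2 : (((g t).1.2 + 1 : Fin (c+1)) : ℕ) = 0 := by
          rw [hj, Fin.last_add_one]; rfl
        have h3 : (((g t).1.2 : Fin (c+1)) : ℕ) = c := by rw [hj]; exact Fin.val_last c
        rw [min_eq_left h1, h2, h3, Nat.add_mul, Nat.one_mul]
        omega
      · simp only [if_neg hj, HeadMove.apply]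
        have h2 : (((g t).1.2 + 1 : Fin (c+1)) : ℕ) = ((g t).1.2 : ℕ) + 1 :=
          Fin.val_add_one_of_lt (lt_of_le_of_ne (Fin.le_last _) hj)
        rw [h2]
        ring
  have mono : ∀ t, (g t).2 * (c+1) + ((g t).1.2 : ℕ) = t := by
    intro t
    induction t with
    | zero => rw [hg0]; simp [lift]
    | succ t ih => rw [key t, ih]
  have hA := mono ((n+1) * (c+1))
  have hB : (g ((n+1)*(c+1))).2 * (c+1) ≤ n * (c+1) :=
    Nat.mul_le_mul_right _ (hpos _)
  have hC : ((g ((n+1)*(c+1))).1.2 : ℕ) ≤ c := by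
    have := ((g ((n+1)*(c+1))).1.2).isLt; omega
  have hD : (n+1) * (c+1) = n * (c+1) + (c+1) := by ring
  linarith
theorem lift_accepts_mp {Q : Type} {k : ℕ} {α : Type} (M : MNFA Q k α) (c : ℕ) (x : List α)
    (h : (lift M c).Accepts x) : M.Accepts x := by
  obtain ⟨f', L', ⟨h0, hsteps⟩, hacc⟩ := h
  have hinv : ∀ t, t ≤ L' → ((f' t).1.1 = M.qacc ∨ (f' t).1.1 = M.qrej) →
      (f' t).1.2 = (0 : Fin (c+1)) := by
    intro t
    induction t with
    | zero => intro _ _; rw [h0]; rfl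
    | succ t ih =>
      intro ht hhalt
      obtain ⟨_, _, tr, htr, hst, _⟩ := hsteps t (by omega)
      simp only [lift] at htr
      split at htr
      · exact absurd htr (Set.notMem_empty _)
      · obtain ⟨p, hp, rfl⟩ := htr
        rw [hst] at hhalt ⊢
        simp only at hhalt ⊢
        rw [if_pos hhalt]
  refine ⟨fun t => ((f' t).1.1, fun h => (f' t).2 h.castSucc), L', ⟨?_, ?_⟩, ?_⟩
  · beta_reduce
    rw [h0]; rfl
  · intro t ht
    obtain ⟨hne1, hne2, tr, htr, hst, hmv⟩ := hsteps t ht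
    refine ⟨?_, ?_, ?_⟩
    · intro hq
      exact hne1 (Prod.ext hq (hinv t (by omega) (Or.inl hq)))
    · intro hq
      exact hne2 (Prod.ext hq (hinv t (by omega) (Or.inr hq)))
    · simp only [lift] at htr
      split at htr
      · exact absurd htr (Set.notMem_empty _)
      · obtain ⟨p, hp, rfl⟩ := htr
        beta_reduce
        refine ⟨p, hp, ?_, ?_⟩
        · rw [hst]
        · intro j
          have := hmv j.castSucc
          simp only at this
          rw [this, Fin.lastCases_castSucc]
  · beta_reduce
    rw [hacc]
    rfl
theorem div_succ_wrap (C t : ℕ) (hC : 0 < C) (h : t % C = C - 1) : (t+1)/C = t/C + 1 := by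
  have hdm := Nat.div_add_mod t C
  have e : t + 1 = C * (t/C + 1) := by rw [Nat.mul_add, Nat.mul_one]; omega
  rw [e, Nat.mul_div_cancel_left _ hC]

theorem div_succ_same (C t : ℕ) (hC : 0 < C) (h : t % C + 1 < C) : (t+1)/C = t/C := by
  have hdm := Nat.div_add_mod t C
  have e : t + 1 = C * (t/C) + (t % C + 1) := by omega
  rw [e, Nat.mul_add_div hC, Nat.div_eq_of_lt h, Nat.add_zero]

open Classical in
theorem lift_accepts_mpr {Q : Type} {k : ℕ} {α : Type} (M : MNFA Q k α) (c : ℕ) (x : List α)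
    (hrt : ∀ f L, M.IsPath x f L → L ≤ c * (x.length + 1))
    (h : M.Accepts x) : (lift M c).Accepts x := by
  obtain ⟨f, L, ⟨h0, hstep⟩, hacc⟩ := h
  have hL : L ≤ c * (x.length + 1) := hrt f L ⟨h0, hstep⟩
  set n := x.length with hn
  refine ⟨fun t => (((f t).1,
      if (f t).1 = M.qacc ∨ (f t).1 = M.qrej then 0
      else (⟨t % (c+1), Nat.mod_lt _ (by omega)⟩ : Fin (c+1))),
      fun i => Fin.lastCases (min (t / (c+1)) (n+1)) ((f t).2) i), L, ⟨?_, ?_⟩, ?_⟩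
  · beta_reduce
    rw [h0]
    refine Prod.ext (Prod.ext rfl ?_) (funext fun i => ?_)
    · simp only
      split_ifs <;> rfl
    · simp only
      induction i using Fin.lastCases with
      | last => rw [Fin.lastCases_last]; simp
      | cast j => rw [Fin.lastCases_castSucc]
  · intro t ht
    obtain ⟨hne1, hne2, p, hp, hst, hmv⟩ := hstep t ht
    have hcnt : (if (f t).1 = M.qacc ∨ (f t).1 = M.qrej then (0 : Fin (c+1))
        else ⟨t % (c+1), Nat.mod_lt _ (by omega)⟩)
        = (⟨t % (c+1), Nat.mod_lt _ (by omega)⟩ : Fin (c+1)) :=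
      if_neg (by push_neg; exact ⟨hne1, hne2⟩)
    have hdiv : t / (c+1) ≤ n := by
      have h2 : (n+1) * (c+1) = c * (n+1) + (n+1) := by ring
      have h3 := (Nat.div_lt_iff_lt_mul (by omega : 0 < c+1)).mpr
        (by omega : t < (n+1) * (c+1))
      omega
    have hread : tapeRead x (min (t / (c+1)) (n+1)) ≠ TapeSym.rend :=
      tapeRead_ne_rend_of_le x (by omega)
    beta_reduce
    rw [hcnt]
    refine ⟨?_, ?_, ?_⟩
    · intro hq
      exact hne1 (congrArg Prod.fst hq)
    · intro hq
      exact hne2 (congrArg Prod.fst hq)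
    · refine ⟨((p.1, if p.1 = M.qacc ∨ p.1 = M.qrej then 0
          else (⟨t % (c+1), Nat.mod_lt _ (by omega)⟩ : Fin (c+1)) + 1),
          fun i => Fin.lastCases
            (if (⟨t % (c+1), Nat.mod_lt _ (by omega)⟩ : Fin (c+1)) = Fin.last c
             then HeadMove.R else HeadMove.S) p.2 i), ?_, ?_, ?_⟩
      · -- membership
        simp only [lift]
        rw [if_neg (by rw [Fin.lastCases_last]; exact hread)]
        refine ⟨p, ?_, rfl⟩
        have e : (fun h => tapeRead x
            (Fin.lastCases (min (t / (c+1)) (n+1)) ((f t).2) (Fin.castSucc h)))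
            = fun h => tapeRead x ((f t).2 h) := by
          funext h
          rw [Fin.lastCases_castSucc]
        rw [e]
        exact hp
      · -- state
        refine Prod.ext hst ?_
        simp only
        by_cases hq : p.1 = M.qacc ∨ p.1 = M.qrej
        · rw [if_pos (by rw [hst]; exact hq), if_pos hq]
        · rw [if_neg (by rw [hst]; exact hq), if_neg hq]
          apply Fin.ext
          rw [Fin.val_add, Fin.val_one', ← Nat.add_mod]
      · -- heads
        intro i
        induction i using Fin.lastCases with
        | last =>
          simp only [Fin.lastCases_last]
          by_cases hj : t % (c+1) = c
          · rw [if_pos (Fin.ext (by rw [Fin.val_last]; exact hj))]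
            show min ((t+1)/(c+1)) (n+1) = min (min (t/(c+1)) (n+1) + 1) (n+1)
            rw [div_succ_wrap (c+1) t (by omega) (by omega)]
            omega
          · rw [if_neg (fun he => hj (by simpa using congrArg Fin.val he))]
            show min ((t+1)/(c+1)) (n+1) = min (t/(c+1)) (n+1)
            have : t % (c+1) < c + 1 := Nat.mod_lt _ (by omega)
            rw [div_succ_same (c+1) t (by omega) (by omega)]
        | cast j =>
          simp only [Fin.lastCases_castSucc]
          exact hmv j
  · beta_reduce
    show ((f L).1, _) = ((M.qacc, 0) : Q × Fin (c+1))
    rw [if_pos (Or.inl hacc)]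
    exact Prod.ext hacc rfl


/-- If a 2nfa(k) `M` has at least one safe head, then `M` runs in linear time:
every computational path of `M` on an input of length `n` has length at most
`|Q|·(n+2)`.  Consequently, a language is recognized by a linear-time 2nfa(k)
for some `k` if and only if it is recognized by some 2nfa(k') with at least
one safe head. -/
theorem stmt7 :
    (∀ (Q : Type) (_ : Fintype Q) (k : ℕ) (α : Type) (M : MNFA Q k α) (i : Fin k),
      M.SafeHead i →
      ∀ (x : List α) (f : ℕ → Q × (Fin k → ℕ)) (L : ℕ),
        M.IsPath x f L → L ≤ Fintype.card Q * (x.length + 2)) ∧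
    (∀ (α : Type) (A : Set (List α)),
      (∃ (Q : Type) (_ : Fintype Q) (k : ℕ) (M : MNFA Q k α) (c : ℕ),
        M.Recognizes A ∧
        ∀ (x : List α) (f : ℕ → Q × (Fin k → ℕ)) (L : ℕ),
          M.IsPath x f L → L ≤ c * (x.length + 1)) ↔
      (∃ (Q' : Type) (_ : Fintype Q') (k' : ℕ) (M' : MNFA Q' k' α) (i : Fin k'),
        M'.Recognizes A ∧ M'.SafeHead i)) := by
  constructor
  · intro Q fQ k α M i hs x f L hp
    exact part1 M i hs x f L hp
  · intro α A
    constructor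
    · rintro ⟨Q, fQ, k, M, c, hrec, hrt⟩
      refine ⟨Q × Fin (c+1), inferInstance, k + 1, lift M c, Fin.last k, ?_, lift_safe M c⟩
      intro x
      constructor
      · intro h
        exact (hrec x).mp (lift_accepts_mp M c x h)
      · intro h
        exact lift_accepts_mpr M c x (fun f L hp => hrt x f L hp) ((hrec x).mpr h)
    · rintro ⟨Q', fQ', k', M', i, hrec, hsafe⟩
      refine ⟨Q', fQ', k', M', 2 * Fintype.card Q', hrec, ?_⟩
      intro x f L hp
      have h1 := part1 M' i hsafe x f L hp
      have h2 : Fintype.card Q' * (x.length + 2) ≤ 2 * Fintype.card Q' * (x.length + 1) := by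
        nlinarith [Fintype.card Q' * x.length, Nat.zero_le (Fintype.card Q' * x.length)]
      omega
end

section
/- In a deterministic transition system run on a certificate stream, if the collective configuration of a set 𝒱 of machines at certificate position j equals that at an earlier position i (with the consumed certificate segment s between them), then feeding the eventually-periodic certificate p·s^∞ (where p is the prefix up to position j) causes every machine in 𝒱 to run forever. -/
/-!
After the prefix `p` every machine sits at `c i`, and each further copy of `s` brings it back
to `c i`; so the run on `p · s^∞` is defined at every position `|p| + t·|s|`, and a run that is
defined at some position is defined at every earlier one.
-/

/-- The run of a deterministic machine (step function `step`, returning `none`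
when the machine halts) on a certificate stream `cert`, as an `Option`-valued
sequence of configurations. -/
def runStream {K Λ : Type} (step : K → Λ → Option K) (init : K)
    (cert : ℕ → Λ) : ℕ → Option K
  | 0 => some init
  | n + 1 => (runStream step init cert n).bind fun c => step c (cert n)

section Run

variable {K Λ : Type} (step : K → Λ → Option K)

theorem runStream_eq_foldlM (init : K) (cert : ℕ → Λ) (n : ℕ) :
    runStream step init cert n = ((List.range n).map cert).foldlM (m := Option) step init := by
  induction n with
  | zero => rfl
  | succ n ih =>
    rw [List.range_succ, List.map_append, List.foldlM_append, runStream, ih]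
    simp [Option.bind_eq_bind]

theorem runStream_isSome_of_le {init : K} {cert : ℕ → Λ} {m n : ℕ} (hmn : m ≤ n)
    (h : (runStream step init cert n).isSome) : (runStream step init cert m).isSome := by
  induction hmn with
  | refl => exact h
  | step _ ih =>
    refine ih ?_
    rw [runStream] at h
    exact Option.isSome_of_isSome_bind h

theorem foldlM_flatten_replicate_of_foldlM_eq_self {c : K} {s : List Λ}
    (hcyc : s.foldlM (m := Option) step c = some c) (t : ℕ) :
    (List.replicate t s).flatten.foldlM (m := Option) step c = some c := by
  induction t with
  | zero => rfl
  | succ t ih =>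
    rw [List.replicate_succ, List.flatten_cons, List.foldlM_append, hcyc]
    exact ih

end Run

def prefixThenCycle {Λ : Type} (p s : List Λ) (hs : s ≠ []) (j : ℕ) : Λ :=
  if h : j < p.length then p.get ⟨j, h⟩
  else s.get ⟨(j - p.length) % s.length, Nat.mod_lt _ (List.length_pos_iff.mpr hs)⟩

theorem map_range_prefixThenCycle {Λ : Type} (p s : List Λ) (hs : s ≠ []) (t : ℕ) :
    (List.range (p.length + t * s.length)).map (prefixThenCycle p s hs)
      = p ++ (List.replicate t s).flatten := by
  induction t with
  | zero =>
    refine List.ext_getElem (by simp) fun j hj _ => ?_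
    rw [List.getElem_map, List.getElem_range, prefixThenCycle,
      dif_pos (by simpa using hj)]
    simp
  | succ t ih =>
    have hblock : (List.range s.length).map
        (fun k => prefixThenCycle p s hs (p.length + t * s.length + k)) = s := by
      refine List.ext_getElem (by simp) fun k _ hk => ?_
      have hidx : (p.length + t * s.length + k - p.length) % s.length = k := by
        rw [Nat.add_assoc, Nat.add_sub_cancel_left, Nat.mul_comm, Nat.mul_add_mod,
          Nat.mod_eq_of_lt hk]
      rw [List.getElem_map, List.getElem_range, prefixThenCycle, dif_neg (by omega)]
      simp only [List.get_eq_getElem, hidx]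
    rw [add_mul, one_mul, ← add_assoc, List.range_add, List.map_append, ih, List.map_map,
      Function.comp_def, hblock, List.replicate_succ', List.flatten_append,
      List.flatten_singleton, List.append_assoc]

/-- If every machine `i` of a collection `𝒱`, run deterministically on the
certificate prefix `p`, reaches configuration `c i`, and consuming the segment
`s` from `c i` returns it to `c i` (the collective configuration repeats),
then on the eventually-periodic certificate `p · s^∞` every machine in `𝒱`
runs forever (its run is defined at every step). -/
theorem stmt13 (ι : Type) (Λ : Type) (F : ι → Type)
    (step : ∀ i, F i → Λ → Option (F i)) (init : ∀ i, F i)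
    (p s : List Λ) (hs : s ≠ [])
    (c : ∀ i, F i)
    (hp : ∀ i, p.foldlM (m := Option) (step i) (init i) = some (c i))
    (hcyc : ∀ i, s.foldlM (m := Option) (step i) (c i) = some (c i)) :
    ∀ (i : ι) (n : ℕ),
      (runStream (step i) (init i)
        (fun j => if h : j < p.length then p.get ⟨j, h⟩
          else s.get ⟨(j - p.length) % s.length,
            Nat.mod_lt _ (List.length_pos_iff.mpr hs)⟩) n).isSome := by
  intro i n
  change (runStream (step i) (init i) (prefixThenCycle p s hs) n).isSome
  have hperiod : ∀ t, runStream (step i) (init i) (prefixThenCycle p s hs)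
      (p.length + t * s.length) = some (c i) := fun t => by
    rw [runStream_eq_foldlM, map_range_prefixThenCycle, List.foldlM_append, hp]
    exact foldlM_flatten_replicate_of_foldlM_eq_self (step i) (hcyc i) t
  have hn : n ≤ p.length + n * s.length :=
    le_add_left (Nat.le_mul_of_pos_right n (List.length_pos_iff.mpr hs))
  exact runStream_isSome_of_le (step i) hn (by rw [hperiod]; rfl)
end
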